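/- The model vector fields on ℝ⁴ satisfy the Lie bracket relations [V_x,V_y] = V₂, [V_x,V₂] = V₃, [V_y,V₂] = 0, [V_x,V₃] = 0, [V_y,V₃] = 0 and [V₂,V₃] = 0, as identities of vector fields on ℝ⁴ (i.e. pointwise at every a ∈ ℝ⁴). -/
import Mathlib

open ContinuousLinearMap

/-- The model vector field `V_x = (1/2)∂/∂x + y ∂/∂u₁ + xy ∂/∂u₂` on `ℝ⁴`. -/
noncomputable def Vx : (Fin 4 → ℝ) → (Fin 4 → ℝ) := fun a => ![1 / 2, 0, a 1, a 0 * a 1]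

/-- The model vector field `V_y = −(1/2)∂/∂y + x ∂/∂u₁ + ((3x²+y²)/2) ∂/∂u₂` on `ℝ⁴`. -/
noncomputable def Vy : (Fin 4 → ℝ) → (Fin 4 → ℝ) :=
  fun a => ![0, -(1 / 2), a 0, (3 * (a 0) ^ 2 + (a 1) ^ 2) / 2]

/-- The model vector field `V₂ = ∂/∂u₁ + 2x ∂/∂u₂` on `ℝ⁴`. -/
noncomputable def V2 : (Fin 4 → ℝ) → (Fin 4 → ℝ) := fun a => ![0, 0, 1, 2 * a 0]

/-- The model vector field `V₃ = ∂/∂u₂` on `ℝ⁴`. -/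
noncomputable def V3 : (Fin 4 → ℝ) → (Fin 4 → ℝ) := fun _ => ![0, 0, 0, 1]

noncomputable def LVx (a : Fin 4 → ℝ) : (Fin 4 → ℝ) →L[ℝ] (Fin 4 → ℝ) :=
  ContinuousLinearMap.pi ![0, 0, proj 1, a 0 • proj 1 + a 1 • proj 0]

noncomputable def LVy (a : Fin 4 → ℝ) : (Fin 4 → ℝ) →L[ℝ] (Fin 4 → ℝ) :=
  ContinuousLinearMap.pi ![0, 0, proj 0, (3 * a 0) • proj 0 + a 1 • proj 1]

noncomputable def LV2 : (Fin 4 → ℝ) →L[ℝ] (Fin 4 → ℝ) :=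
  ContinuousLinearMap.pi ![0, 0, 0, (2 : ℝ) • proj 0]

lemma hVx (a : Fin 4 → ℝ) : HasFDerivAt Vx (LVx a) a := by
  rw [LVx, hasFDerivAt_pi']
  intro i
  fin_cases i <;> simp [Vx]
  · exact hasFDerivAt_const _ _
  · exact hasFDerivAt_const _ _
  · exact hasFDerivAt_apply 1 a
  · exact (hasFDerivAt_apply 0 a).mul (hasFDerivAt_apply 1 a)

lemma hVy (a : Fin 4 → ℝ) : HasFDerivAt Vy (LVy a) a := by
  rw [LVy, hasFDerivAt_pi']
  intro i
  fin_cases i <;> simp [Vy]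
  · exact hasFDerivAt_const _ _
  · exact hasFDerivAt_const _ _
  · exact hasFDerivAt_apply 0 a
  · have h : HasFDerivAt (fun a : Fin 4 → ℝ => 3 / 2 * (a 0 * a 0) + 1 / 2 * (a 1 * a 1))
        ((3 / 2 : ℝ) • (a 0 • (proj 0 : (Fin 4 → ℝ) →L[ℝ] ℝ) + a 0 • proj 0)
          + (1 / 2 : ℝ) • (a 1 • (proj 1 : (Fin 4 → ℝ) →L[ℝ] ℝ) + a 1 • proj 1)) a :=
      (((hasFDerivAt_apply 0 a).mul (hasFDerivAt_apply 0 a)).const_mul ((3:ℝ)/2)).add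
        (((hasFDerivAt_apply 1 a).mul (hasFDerivAt_apply 1 a)).const_mul ((1:ℝ)/2))
    have e : (fun a : Fin 4 → ℝ => (3 * a 0 ^ 2 + a 1 ^ 2) / 2)
        = fun a : Fin 4 → ℝ => 3 / 2 * (a 0 * a 0) + 1 / 2 * (a 1 * a 1) := by
      funext a; ring
    rw [e]
    exact h.congr_fderiv (by ext v; simp; ring)

lemma hV2 (a : Fin 4 → ℝ) : HasFDerivAt V2 LV2 a := by
  rw [LV2, hasFDerivAt_pi']
  intro i
  fin_cases i <;> simp [V2]
  · exact hasFDerivAt_const _ _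
  · exact hasFDerivAt_const _ _
  · exact hasFDerivAt_const _ _
  · have h : HasFDerivAt (fun a : Fin 4 → ℝ => 2 * a 0)
        ((2 : ℝ) • (proj 0 : (Fin 4 → ℝ) →L[ℝ] ℝ)) a := by
      exact (hasFDerivAt_apply (𝕜 := ℝ) 0 a).const_mul (2:ℝ)
    exact h

lemma hV3 (a : Fin 4 → ℝ) : HasFDerivAt V3 (0 : (Fin 4 → ℝ) →L[ℝ] (Fin 4 → ℝ)) a := hasFDerivAt_const (![0, 0, 0, 1] : Fin 4 → ℝ) a

theorem stmt_9 :
    (∀ a, VectorField.lieBracket ℝ Vx Vy a = V2 a) ∧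
    (∀ a, VectorField.lieBracket ℝ Vx V2 a = V3 a) ∧
    (∀ a, VectorField.lieBracket ℝ Vy V2 a = 0) ∧
    (∀ a, VectorField.lieBracket ℝ Vx V3 a = 0) ∧
    (∀ a, VectorField.lieBracket ℝ Vy V3 a = 0) ∧
    (∀ a, VectorField.lieBracket ℝ V2 V3 a = 0) := by
  refine ⟨?_, ?_, ?_, ?_, ?_, ?_⟩ <;> intro a <;>
    simp only [VectorField.lieBracket, (hVx a).fderiv, (hVy a).fderiv, (hV2 a).fderiv,
      (hV3 a).fderiv] <;>
    funext i <;>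
    fin_cases i <;>
    simp [LVx, LVy, LV2, Vx, Vy, V2, V3] <;>
    ring
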